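/- The cone generated by R = { B ∈ S^n : v^T B v ≥ 1 for all v ∈ ℤ^n_{≥0} \ {0} } equals the interior of the copositive cone: cone(R) = interior(COP^n). -/

import Mathlib

open Matrix

/-- The quadratic form `B[x] = xᵀ B x`. -/
def quadForm {n : ℕ} (B : Matrix (Fin n) (Fin n) ℝ) (x : Fin n → ℝ) : ℝ :=
  x ⬝ᵥ B.mulVec x

/-- The Ryshkov set `R = {B ∈ Sⁿ : B[v] ≥ 1 for all v ∈ ℤⁿ₊ \ {0}}`. -/
def ryshkov (n : ℕ) : Set (Matrix (Fin n) (Fin n) ℝ) :=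
  {B | B.IsSymm ∧ ∀ v : Fin n → ℤ, (∀ i, 0 ≤ v i) → v ≠ 0 →
    1 ≤ quadForm B (fun i => (v i : ℝ))}

section Aux

variable {n : ℕ}

lemma quadForm_smul (c : ℝ) (B : Matrix (Fin n) (Fin n) ℝ) (x : Fin n → ℝ) :
    quadForm (c • B) x = c * quadForm B x := by
  simp [quadForm, Matrix.smul_mulVec, dotProduct_smul, smul_eq_mul]

lemma quadForm_smul_vec (c : ℝ) (B : Matrix (Fin n) (Fin n) ℝ) (x : Fin n → ℝ) :
    quadForm B (c • x) = c ^ 2 * quadForm B x := by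
  simp [quadForm, Matrix.mulVec_smul, smul_dotProduct, dotProduct_smul, smul_eq_mul]; ring

lemma quadForm_expand (B : Matrix (Fin n) (Fin n) ℝ) (x e : Fin n → ℝ) (k : ℝ) :
    quadForm B (k • x + e) = k ^ 2 * quadForm B x
      + k * (x ⬝ᵥ B.mulVec e + e ⬝ᵥ B.mulVec x) + quadForm B e := by
  simp [quadForm, Matrix.mulVec_add, Matrix.mulVec_smul, dotProduct_add, add_dotProduct,
    dotProduct_smul, smul_dotProduct, smul_eq_mul]; ring

lemma continuous_quadForm (B : Matrix (Fin n) (Fin n) ℝ) : Continuous (quadForm B) := by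
  unfold quadForm
  simp only [Matrix.mulVec, dotProduct]
  exact continuous_finset_sum _ fun i _ => (continuous_apply i).mul
    (continuous_finset_sum _ fun j _ => continuous_const.mul (continuous_apply j))

lemma dirichlet (x : Fin n → ℝ) (Q : ℕ) (hQ : 0 < Q) :
    ∃ (k : ℕ) (p : Fin n → ℤ), 0 < k ∧ ∀ i, |(k : ℝ) * x i - (p i : ℝ)| < 1 / Q := by
  have hQR : (0:ℝ) < Q := by exact_mod_cast hQ
  have hbox : ∀ (m : ℕ) (i : Fin n), (⌊(Q : ℝ) * Int.fract ((m : ℝ) * x i)⌋).toNat < Q := by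
    intro m i
    have h1 : (Q : ℝ) * Int.fract ((m : ℝ) * x i) < Q := by
      have := Int.fract_lt_one ((m : ℝ) * x i)
      nlinarith
    have hfl : ⌊(Q : ℝ) * Int.fract ((m : ℝ) * x i)⌋ < (Q : ℤ) :=
      Int.floor_lt.mpr (by exact_mod_cast h1)
    omega
  set f : Fin (Q ^ n + 1) → (Fin n → Fin Q) := fun m i =>
    ⟨(⌊(Q : ℝ) * Int.fract (((m : ℕ) : ℝ) * x i)⌋).toNat, hbox m i⟩ with hf
  have hcard : Fintype.card (Fin n → Fin Q) < Fintype.card (Fin (Q ^ n + 1)) := by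
    simp [Fintype.card_fun]
  obtain ⟨a, b, hne, heq⟩ := Fintype.exists_ne_map_eq_of_card_lt f hcard
  wlog hab : (a : ℕ) < (b : ℕ) generalizing a b
  · exact this b a hne.symm heq.symm (by
      have := Fin.val_ne_of_ne hne; omega)
  refine ⟨(b : ℕ) - (a : ℕ), fun i => ⌊((b : ℕ) : ℝ) * x i⌋ - ⌊((a : ℕ) : ℝ) * x i⌋,
    by omega, fun i => ?_⟩
  have hcast : (((b : ℕ) - (a : ℕ) : ℕ) : ℝ) = ((b : ℕ) : ℝ) - ((a : ℕ) : ℝ) := by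
    push_cast [Nat.cast_sub hab.le]; ring
  have hkey : ((((b : ℕ) - (a : ℕ) : ℕ)) : ℝ) * x i
      - ((⌊((b : ℕ) : ℝ) * x i⌋ - ⌊((a : ℕ) : ℝ) * x i⌋ : ℤ) : ℝ)
      = Int.fract (((b : ℕ) : ℝ) * x i) - Int.fract (((a : ℕ) : ℝ) * x i) := by
    rw [hcast]
    simp only [Int.fract]
    push_cast
    ring
  rw [hkey]
  -- same box
  have hfloors : ⌊(Q : ℝ) * Int.fract (((a : ℕ) : ℝ) * x i)⌋
      = ⌊(Q : ℝ) * Int.fract (((b : ℕ) : ℝ) * x i)⌋ := by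
    have h1 : (f a i).val = (f b i).val := by rw [heq]
    simp only [hf] at h1
    have ha0 : 0 ≤ ⌊(Q : ℝ) * Int.fract (((a : ℕ) : ℝ) * x i)⌋ :=
      Int.floor_nonneg.mpr (mul_nonneg hQR.le (Int.fract_nonneg _))
    have hb0 : 0 ≤ ⌊(Q : ℝ) * Int.fract (((b : ℕ) : ℝ) * x i)⌋ :=
      Int.floor_nonneg.mpr (mul_nonneg hQR.le (Int.fract_nonneg _))
    omega
  set u := (Q : ℝ) * Int.fract (((a : ℕ) : ℝ) * x i) with hu
  set v := (Q : ℝ) * Int.fract (((b : ℕ) : ℝ) * x i) with hv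
  have h1 : (⌊u⌋ : ℝ) ≤ u := Int.floor_le u
  have h2 : u < ⌊u⌋ + 1 := Int.lt_floor_add_one u
  have h3 : (⌊v⌋ : ℝ) ≤ v := Int.floor_le v
  have h4 : v < ⌊v⌋ + 1 := Int.lt_floor_add_one v
  have h5 : ⌊u⌋ = ⌊v⌋ := hfloors
  have h5' : (⌊u⌋ : ℝ) = (⌊v⌋ : ℝ) := by exact_mod_cast h5
  have e1 : Int.fract (((b : ℕ) : ℝ) * x i) = v / Q := by
    rw [hv]; field_simp
  have e2 : Int.fract (((a : ℕ) : ℝ) * x i) = u / Q := by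
    rw [hu]; field_simp
  rw [e1, e2, abs_sub_lt_iff, div_sub_div_same, div_sub_div_same,
    div_lt_div_iff_of_pos_right hQR, div_lt_div_iff_of_pos_right hQR]
  constructor <;> linarith

lemma linear_zero {L q δ : ℝ} (hδ : 0 < δ)
    (h : ∀ t : ℝ, |t| ≤ δ → 0 ≤ t * L + t ^ 2 * q) : L = 0 := by
  by_contra hL
  set s := min δ (|L| / (2 * (|q| + 1))) with hs
  have hq1 : 0 < |q| + 1 := by positivity
  have hs0 : 0 < s := lt_min hδ (by positivity)
  have hsδ : s ≤ δ := min_le_left _ _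
  have hsq : s ≤ |L| / (2 * (|q| + 1)) := min_le_right _ _
  have hsq' : s * (2 * (|q| + 1)) ≤ |L| := by
    exact (le_div_iff₀ (by positivity)).mp hsq
  rcases lt_or_gt_of_ne hL with h1 | h1
  · have := h s (by rw [abs_of_pos hs0]; exact hsδ)
    have hLabs : |L| = -L := abs_of_neg h1
    nlinarith [le_abs_self q, abs_nonneg q, sq_nonneg s]
  · have := h (-s) (by rw [abs_neg, abs_of_pos hs0]; exact hsδ)
    have hLabs : |L| = L := abs_of_pos h1
    nlinarith [le_abs_self q, abs_nonneg q, sq_nonneg s]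

lemma dot_bound (B : Matrix (Fin n) (Fin n) ℝ) (u w : Fin n → ℝ) (a b : ℝ)
    (ha : 0 ≤ a) (hb : 0 ≤ b) (hu : ∀ i, |u i| ≤ a) (hw : ∀ j, |w j| ≤ b) :
    |u ⬝ᵥ B.mulVec w| ≤ a * b * (∑ i, ∑ j, |B i j|) := by
  simp only [Matrix.mulVec, dotProduct]
  calc |∑ i, u i * ∑ j, B i j * w j| ≤ ∑ i, |u i * ∑ j, B i j * w j| :=
        Finset.abs_sum_le_sum_abs _ _
    _ ≤ ∑ i, ∑ j, a * b * |B i j| := by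
        apply Finset.sum_le_sum
        intro i _
        rw [abs_mul]
        calc |u i| * |∑ j, B i j * w j| ≤ a * ∑ j, |B i j * w j| := by
              apply mul_le_mul (hu i) (Finset.abs_sum_le_sum_abs _ _) (abs_nonneg _) ha
          _ ≤ ∑ j, a * b * |B i j| := by
              rw [Finset.mul_sum]
              apply Finset.sum_le_sum
              intro j _
              rw [abs_mul]
              calc a * (|B i j| * |w j|) ≤ a * (|B i j| * b) := by
                    apply mul_le_mul_of_nonneg_left _ ha
                    exact mul_le_mul_of_nonneg_left (hw j) (abs_nonneg _)
                _ = a * b * |B i j| := by ring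
    _ = a * b * (∑ i, ∑ j, |B i j|) := by rw [Finset.mul_sum]; simp [Finset.mul_sum]

lemma M_nonneg (B : Matrix (Fin n) (Fin n) ℝ) : 0 ≤ ∑ i, ∑ j, |B i j| :=
  Finset.sum_nonneg fun i _ => Finset.sum_nonneg fun j _ => abs_nonneg _

lemma ryshkov_nonneg {B : Matrix (Fin n) (Fin n) ℝ} (hB : B ∈ ryshkov n)
    (x : Fin n → ℝ) (hx : ∀ i, 0 ≤ x i) : 0 ≤ quadForm B x := by
  by_cases hx0 : x = 0
  · simp [hx0, quadForm]
  obtain ⟨j, hj⟩ := Function.ne_iff.mp hx0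
  have hxj : 0 < x j := (hx j).lt_of_ne' hj
  set M := ∑ i, ∑ j, |B i j| with hM
  have hM0 : 0 ≤ M := M_nonneg B
  set X := 1 + ∑ i, |x i| with hX
  have hX0 : 0 ≤ X := by positivity
  have hxb : ∀ i, |x i| ≤ X := by
    intro i
    have : |x i| ≤ ∑ i, |x i| :=
      Finset.single_le_sum (fun i _ => abs_nonneg (x i)) (Finset.mem_univ i)
    linarith
  by_contra hneg
  push_neg at hneg
  set q := quadForm B x with hq
  obtain ⟨m, hm⟩ := exists_nat_gt (max 1 ((2 * X * M + M) / (-q)))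
  have hm1 : (1:ℝ) ≤ m := le_of_lt (lt_of_le_of_lt (le_max_left _ _) hm)
  have hm2 : (2 * X * M + M) / (-q) < m := lt_of_le_of_lt (le_max_right _ _) hm
  set v : Fin n → ℤ := fun i => ⌈(m : ℝ) * x i⌉ with hv
  have hv0 : ∀ i, 0 ≤ v i := fun i => Int.ceil_nonneg (mul_nonneg (by linarith) (hx i))
  have hvne : v ≠ 0 := by
    intro h
    have : v j = 0 := congrFun h j
    have : (0:ℤ) < v j := Int.ceil_pos.mpr (mul_pos (by linarith) hxj)
    omega
  have hry := hB.2 v hv0 hvne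
  set ε : Fin n → ℝ := fun i => (v i : ℝ) - (m : ℝ) * x i with hε
  have hεb : ∀ i, |ε i| ≤ 1 := by
    intro i
    rw [abs_le]
    constructor
    · have := Int.le_ceil ((m : ℝ) * x i); simp only [hε]; linarith
    · have := Int.ceil_lt_add_one ((m : ℝ) * x i); simp only [hε]; linarith
  have hvdec : (fun i => (v i : ℝ)) = (m : ℝ) • x + ε := by
    funext i; simp [hε]
  rw [hvdec, quadForm_expand] at hry
  have hb1 : |x ⬝ᵥ B.mulVec ε| ≤ X * 1 * M := dot_bound B x ε X 1 hX0 zero_le_one hxb hεb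
  have hb2 : |ε ⬝ᵥ B.mulVec x| ≤ 1 * X * M := dot_bound B ε x 1 X zero_le_one hX0 hεb hxb
  have hb3 : |ε ⬝ᵥ B.mulVec ε| ≤ 1 * 1 * M := dot_bound B ε ε 1 1 zero_le_one zero_le_one hεb hεb
  have hb3' : quadForm B ε ≤ M := by
    have := abs_le.mp hb3; simpa [quadForm] using this.2
  have habs1 := abs_le.mp hb1
  have habs2 := abs_le.mp hb2
  -- 1 ≤ m² q + m (L) + q(ε) ≤ m² q + m*2XM + M
  have hmain : 1 ≤ (m:ℝ)^2 * q + (m:ℝ) * (2 * X * M) + M := by nlinarith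
  have hq0 : 0 < -q := by linarith
  have hmq : (2 * X * M + M) < (m:ℝ) * (-q) := by
    rw [div_lt_iff₀ hq0] at hm2; linarith
  nlinarith

set_option maxHeartbeats 1000000 in
lemma ryshkov_pos {B : Matrix (Fin n) (Fin n) ℝ} (hB : B ∈ ryshkov n)
    (x : Fin n → ℝ) (hx : ∀ i, 0 ≤ x i) (hx0 : x ≠ 0) : 0 < quadForm B x := by
  have h0 := ryshkov_nonneg hB x hx
  rcases h0.lt_or_eq with h | h
  · exact h
  exfalso
  have hqe : quadForm B x = 0 := h.symm
  obtain ⟨j, hj⟩ := Function.ne_iff.mp hx0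
  have hxj : 0 < x j := (hx j).lt_of_ne' hj
  set M := ∑ i, ∑ j, |B i j| with hM
  have hM0 : 0 ≤ M := M_nonneg B
  obtain ⟨Q, hQ⟩ := exists_nat_gt (max (max M (1 / x j)) 1)
  have hQ1 : (1:ℝ) < Q := lt_of_le_of_lt (le_max_right _ _) hQ
  have hQM : M < Q := lt_of_le_of_lt (le_max_left _ _ |>.trans (le_max_left _ _)) hQ
  have hQxj : 1 / x j < Q := lt_of_le_of_lt ((le_max_right _ _).trans (le_max_left _ _)) hQ
  have hQR : (0:ℝ) < Q := by linarith
  have hQpos : 0 < Q := by exact_mod_cast hQR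
  obtain ⟨k, p, hk, hp⟩ := dirichlet x Q hQpos
  have hk1 : (1:ℝ) ≤ k := by exact_mod_cast hk
  have hQinv1 : 1 / (Q:ℝ) < 1 := by rw [div_lt_one hQR]; exact hQ1
  have hplow : ∀ i, (k:ℝ) * x i - 1 / Q < (p i : ℝ) := by
    intro i
    have := (abs_lt.mp (hp i)).2
    linarith
  have hphigh : ∀ i, (p i : ℝ) < (k:ℝ) * x i + 1 / Q := by
    intro i
    have := (abs_lt.mp (hp i)).1
    linarith
  have hp0 : ∀ i, 0 ≤ p i := by
    intro i
    have hkx : 0 ≤ (k:ℝ) * x i := mul_nonneg (by linarith) (hx i)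
    have h1 : (-1:ℝ) < (p i : ℝ) := by
      have := hplow i; linarith
    have h2 : (-1:ℤ) < p i := by exact_mod_cast h1
    omega
  have hpne : p ≠ 0 := by
    intro hpz
    have hpj : (p j : ℝ) = 0 := by rw [congrFun hpz j]; simp
    have h2 := hplow j
    have h3 : 1 / (Q:ℝ) < x j := by
      have h4 : 1 < (Q:ℝ) * x j := (div_lt_iff₀ hxj).mp hQxj
      rw [div_lt_iff₀ hQR]
      nlinarith
    have hkx : x j ≤ (k:ℝ) * x j := le_mul_of_one_le_left hxj.le hk1
    linarith
  have hry := hB.2 p hp0 hpne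
  set ε : Fin n → ℝ := fun i => (p i : ℝ) - (k:ℝ) * x i with hε
  have hεb : ∀ i, |ε i| ≤ 1 / Q := by
    intro i
    have := hp i
    rw [abs_sub_comm] at this
    exact this.le
  have hεsupp : ∀ i, x i = 0 → ε i = 0 := by
    intro i hxi
    have h1 : |(p i : ℝ)| < 1 := by
      have := hp i
      rw [hxi, mul_zero, zero_sub, abs_neg] at this
      linarith
    have h2 : |p i| < 1 := by exact_mod_cast h1
    have h3 : p i = 0 := by
      have := abs_lt.mp h2; omega
    simp [hε, h3, hxi]
  set L := x ⬝ᵥ B.mulVec ε + ε ⬝ᵥ B.mulVec x with hL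
  set qε := quadForm B ε with hqε
  -- feasibility radius
  haveI : Nonempty (Fin n) := ⟨j⟩
  set δ := Finset.univ.inf' Finset.univ_nonempty
      (fun i => if ε i = 0 then 1 else x i / |ε i|) with hδ
  have hδpos : 0 < δ := by
    rw [hδ, Finset.lt_inf'_iff]
    intro i _
    by_cases hεi : ε i = 0
    · simp [hεi]
    · have hxi : 0 < x i := by
        rcases (hx i).lt_or_eq with h' | h'
        · exact h'
        · exact absurd (hεsupp i h'.symm) hεi
      simp only [hεi, if_false]
      positivity
  have hfeas : ∀ t : ℝ, |t| ≤ δ → ∀ i, 0 ≤ x i + t * ε i := by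
    intro t ht i
    by_cases hεi : ε i = 0
    · simp [hεi]; exact hx i
    · have hδi : δ ≤ x i / |ε i| := by
        have h := Finset.inf'_le (fun i => if ε i = 0 then 1 else x i / |ε i|)
          (Finset.mem_univ i)
        rw [if_neg hεi] at h
        rw [hδ]
        exact h
      have hεpos : 0 < |ε i| := abs_pos.mpr hεi
      have h1 : |t * ε i| ≤ x i := by
        rw [abs_mul]
        calc |t| * |ε i| ≤ (x i / |ε i|) * |ε i| := by
              exact mul_le_mul (ht.trans hδi) le_rfl hεpos.le
                (div_nonneg (hx i) (abs_nonneg _))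
          _ = x i := by field_simp
      have := neg_abs_le (t * ε i)
      linarith [(abs_le.mp h1).1]
  have hL0 : L = 0 := by
    apply linear_zero (q := qε) hδpos
    intro t ht
    have hnn := ryshkov_nonneg hB (x + t • ε) (by
      intro i
      have := hfeas t ht i
      simpa [smul_eq_mul] using this)
    have hexp : quadForm B (x + t • ε)
        = quadForm B x + t * L + t ^ 2 * qε := by
      have h1 : x + t • ε = (1:ℝ) • x + t • ε := by rw [one_smul]
      rw [h1, quadForm_expand]
      rw [Matrix.mulVec_smul, dotProduct_smul, smul_dotProduct, quadForm_smul_vec]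
      simp only [smul_eq_mul, one_pow, one_mul]
      ring
    rw [hexp, hqe] at hnn
    linarith
  -- final contradiction
  have hvdec : (fun i => (p i : ℝ)) = (k:ℝ) • x + ε := by
    funext i; simp [hε]
  rw [hvdec, quadForm_expand, hqe] at hry
  rw [← hL] at hry
  rw [hL0] at hry
  have hqεb : qε ≤ (1/Q) * (1/Q) * M := by
    have := dot_bound B ε ε (1/Q) (1/Q) (by positivity) (by positivity) hεb hεb
    have h2 := (abs_le.mp this).2
    simpa [hqε, quadForm] using h2
  have hQQ : M < (Q:ℝ) * Q := by nlinarith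
  have h1 : 1 ≤ qε := by
    rw [hqε]; linarith [hry]
  have h2 : (Q:ℝ) * Q * 1 ≤ (Q:ℝ) * Q * qε := by nlinarith [mul_pos hQR hQR]
  have h3 : (Q:ℝ) * Q * qε ≤ (Q:ℝ) * Q * ((1/Q) * (1/Q) * M) := by
    nlinarith [mul_pos hQR hQR]
  have h4 : (Q:ℝ) * Q * ((1/Q) * (1/Q) * M) = M := by
    field_simp
  nlinarith

lemma strict_copos_mem_cone {B : Matrix (Fin n) (Fin n) ℝ} (hn : 0 < n)
    (hsym : B.IsSymm)
    (hpos : ∀ x : Fin n → ℝ, (∀ i, 0 ≤ x i) → x ≠ 0 → 0 < quadForm B x) :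
    ∃ c : ℝ, 0 < c ∧ ∃ B₀ ∈ ryshkov n, B = c • B₀ := by
  set K : Set (Fin n → ℝ) := {x | (∀ i, 0 ≤ x i) ∧ ∑ i, x i = 1} with hK
  have hKsub : K ⊆ Set.Icc 0 1 := by
    rintro x ⟨hx1, hx2⟩
    constructor
    · intro i; exact hx1 i
    · intro i
      have : x i ≤ ∑ k, x k :=
        Finset.single_le_sum (fun k _ => hx1 k) (Finset.mem_univ i)
      simpa [hx2] using this
  have hKclosed : IsClosed K := by
    have h1 : IsClosed {x : Fin n → ℝ | ∀ i, 0 ≤ x i} := by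
      have : {x : Fin n → ℝ | ∀ i, 0 ≤ x i} = ⋂ i, {x | 0 ≤ x i} := by
        ext x; simp
      rw [this]
      exact isClosed_iInter fun i => isClosed_le continuous_const (continuous_apply i)
    have h2 : IsClosed {x : Fin n → ℝ | ∑ i, x i = 1} :=
      isClosed_eq (continuous_finset_sum _ fun i _ => continuous_apply i) continuous_const
    exact (h1.inter h2)
  have hKcompact : IsCompact K :=
    (isCompact_Icc).of_isClosed_subset hKclosed hKsub
  have hKne : K.Nonempty := by
    refine ⟨fun _ => (n : ℝ)⁻¹, fun i => by positivity, ?_⟩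
    simp [Finset.sum_const, Finset.card_univ]
    field_simp
  obtain ⟨z, hzK, hzmin⟩ := hKcompact.exists_isMinOn hKne (continuous_quadForm B).continuousOn
  set m := quadForm B z with hm
  have hz0 : z ≠ 0 := by
    intro hz
    have := hzK.2
    rw [hz] at this
    simp at this
  have hm0 : 0 < m := hpos z hzK.1 hz0
  refine ⟨m, hm0, m⁻¹ • B, ⟨?_, ?_⟩, ?_⟩
  · -- symmetry
    unfold Matrix.IsSymm
    rw [Matrix.transpose_smul, hsym]
  · intro v hv hvne
    have hvr : ∀ i, (0:ℝ) ≤ (v i : ℝ) := fun i => by exact_mod_cast hv i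
    obtain ⟨j, hj⟩ := Function.ne_iff.mp hvne
    have hvj : 1 ≤ v j := by
      have h1 := hv j
      simp only [Pi.zero_apply] at hj
      omega
    set s : ℝ := ∑ i, (v i : ℝ) with hs
    have hs1 : 1 ≤ s := by
      have : (v j : ℝ) ≤ s :=
        Finset.single_le_sum (fun k _ => hvr k) (Finset.mem_univ j)
      have : (1:ℝ) ≤ (v j : ℝ) := by exact_mod_cast hvj
      linarith [Finset.single_le_sum (fun k _ => hvr k) (Finset.mem_univ j)]
    have hs0 : 0 < s := by linarith
    have hxK : (s⁻¹ • fun i => (v i : ℝ)) ∈ K := by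
      constructor
      · intro i
        simp only [Pi.smul_apply, smul_eq_mul]
        exact mul_nonneg (inv_nonneg.mpr hs0.le) (hvr i)
      · simp only [Pi.smul_apply, smul_eq_mul, ← Finset.mul_sum]
        field_simp
        exact hs.symm
    have hmin := hzmin hxK
    have hq : quadForm B (s⁻¹ • fun i => (v i : ℝ))
        = s⁻¹ ^ 2 * quadForm B (fun i => (v i : ℝ)) := quadForm_smul_vec _ _ _
    have h1 : m ≤ s⁻¹ ^ 2 * quadForm B (fun i => (v i : ℝ)) := by
      rw [← hq]; exact hmin
    have h2 : m * s ^ 2 ≤ quadForm B (fun i => (v i : ℝ)) := by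
      have h4 := mul_le_mul_of_nonneg_right h1 (sq_nonneg s)
      have h5 : s⁻¹ ^ 2 * (quadForm B fun i => (v i : ℝ)) * s ^ 2
          = quadForm B fun i => (v i : ℝ) := by
        field_simp
      linarith
    rw [quadForm_smul]
    have h7 : 0 ≤ m * (s ^ 2 - 1) :=
      mul_nonneg hm0.le (by nlinarith)
    have h3 : m ≤ quadForm B (fun i => (v i : ℝ)) := by nlinarith
    rw [inv_mul_eq_div, le_div_iff₀ hm0]
    linarith
  · rw [smul_smul, mul_inv_cancel₀ (ne_of_gt hm0), one_smul]

end Aux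

theorem cone_ryshkov_eq_interior_cop {n : ℕ} (hn : 0 < n) :
    {B : Matrix (Fin n) (Fin n) ℝ | ∃ c : ℝ, 0 < c ∧ ∃ B₀ ∈ ryshkov n, B = c • B₀}
      = {B | B.IsSymm ∧ ∀ x : Fin n → ℝ, (∀ i, 0 ≤ x i) → x ≠ 0 → 0 < quadForm B x} := by
  ext B
  simp only [Set.mem_setOf_eq]
  constructor
  · rintro ⟨c, hc, B₀, hB₀, rfl⟩
    refine ⟨?_, fun x hx hx0 => ?_⟩
    · unfold Matrix.IsSymm
      rw [Matrix.transpose_smul, hB₀.1]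
    · rw [quadForm_smul]
      exact mul_pos hc (ryshkov_pos hB₀ x hx hx0)
  · rintro ⟨hsym, hpos⟩
    exact strict_copos_mem_cone hn hsym hpos
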